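/- arXiv:1507.03195 — 2 statements merged into one kernel-verified Lean document; each statement's English description precedes it below -/
import Mathlib

section
/- Winning path lemma: Let G be a finite simple graph, let C = {1,2,3,4} be a set of 4 colors, and consider a position (a partial proper coloring of G with colors from C) with Alice to move. Suppose G contains a path P = v_0 v_1 … v_d all of whose vertices are uncolored, where each v_i has degree at least 2 and has at least 8 uncolored pendant neighbors (v_i-leaves), and suppose there are two distinct colors a, b with {a, b} ⊆ Φ(v_0). If either (i) d is odd and {a, b} ⊆ Φ(v_d), or (ii) d is even and C \ {a, b} ⊆ Φ(v_d), then the position is winning for Bob: Bob has a strategy ensuring that some vertex of G is never colored. -/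
namespace GCN

/-- The player whose turn it is. -/
inductive Player : Type
  | alice : Player
  | bob : Player

variable {V α : Type}

/-- A move consisting of coloring the uncolored vertex `v` with color `a` is legal in the
partial coloring `c` if `v` is uncolored and no neighbor of `v` has color `a`. -/
def legalMove (G : SimpleGraph V) (c : V → Option α) (v : V) (a : α) : Prop :=
  c v = none ∧ ∀ u, G.Adj v u → c u ≠ some a

/-- The partial coloring obtained by coloring vertex `v` with color `a`. -/
def applyMove [DecidableEq V] (c : V → Option α) (v : V) (a : α) : V → Option α :=
  Function.update c v (some a)

/-- `BobWins G p c` : in the coloring game on `G` starting from the partial coloring `c` with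
player `p` to move (the moving player must color an uncolored vertex properly whenever a legal
move exists; the game ends when no legal move exists), Bob has a strategy guaranteeing that the
game ends with some vertex uncolored. -/
inductive BobWins [DecidableEq V] (G : SimpleGraph V) : Player → (V → Option α) → Prop
  | endPos (p : Player) (c : V → Option α)
      (hend : ∀ v a, ¬ legalMove G c v a) (hunc : ∃ v, c v = none) : BobWins G p c
  | aliceMove (c : V → Option α)
      (hmoves : ∃ v a, legalMove G c v a)
      (h : ∀ v a, legalMove G c v a → BobWins G .bob (applyMove c v a)) :
      BobWins G .alice c
  | bobMove (c : V → Option α) (v : V) (a : α)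
      (hmove : legalMove G c v a)
      (h : BobWins G .alice (applyMove c v a)) : BobWins G .bob c

/-- `AliceWins G p c` : in the coloring game on `G` starting from the partial coloring `c` with
player `p` to move, Alice has a strategy guaranteeing that the game ends with all vertices
colored. -/
inductive AliceWins [DecidableEq V] (G : SimpleGraph V) : Player → (V → Option α) → Prop
  | endPos (p : Player) (c : V → Option α)
      (hend : ∀ v a, ¬ legalMove G c v a) (hall : ∀ v, c v ≠ none) : AliceWins G p c
  | aliceMove (c : V → Option α) (v : V) (a : α)
      (hmove : legalMove G c v a)
      (h : AliceWins G .bob (applyMove c v a)) : AliceWins G .alice c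
  | bobMove (c : V → Option α)
      (hmoves : ∃ v a, legalMove G c v a)
      (h : ∀ v a, legalMove G c v a → AliceWins G .alice (applyMove c v a)) :
      AliceWins G .bob c

/-- The game chromatic number of `G` : the least number `k` of colors such that Alice has a
winning strategy in the coloring game on `G` played with `k` colors (Alice moving first,
starting from the everywhere-uncolored position). -/
noncomputable def gameChromaticNumber [DecidableEq V] (G : SimpleGraph V) : ℕ :=
  sInf {k : ℕ | AliceWins (α := Fin k) G .alice (fun _ => none)}

/-- `c` is a partial proper coloring of `G` : adjacent colored vertices get distinct colors. -/
def ProperPartial (G : SimpleGraph V) (c : V → Option α) : Prop :=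
  ∀ ⦃u v : V⦄, G.Adj u v → ∀ a : α, c u = some a → c v ≠ some a

/-- `Phi G c v` : the set of colors appearing (under `c`) on the neighbors of `v`. -/
def Phi (G : SimpleGraph V) (c : V → Option α) (v : V) : Set α :=
  {a : α | ∃ u, G.Adj v u ∧ c u = some a}

end GCN

/-!
Bob maintains a path `v₀ … v_d` of uncoloured vertices of degree at least 2 together with a pair
`S` of colours, `|S| = |Sᶜ| = 2`, such that `S ⊆ Φ(v₀)`, `Φ(v_d)` contains `S` or `Sᶜ` according
to the parity of `d`, and every path vertex has two uncoloured leaves for each colour missing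
from its `Φ`. If Alice colours a path vertex `vᵢ` with `x`, the two subpaths beside `vᵢ` require
complementary pairs at their ends next to `vᵢ`; in one of them `x` belongs to the required pair,
and Bob completes that pair with a move on a leaf of that end. If Alice plays off the path, Bob
repairs the leaf budget of the vertex she touched with a new colour on one of its leaves. As
uncoloured vertices keep disappearing, some path vertex eventually sees all colours.
-/

namespace GCN

variable {V α : Type} {G : SimpleGraph V} {c : V → Option α} {u v w m : V} {x y : α} {k : ℕ}
  {S : Set α} {l : List V}

lemma legalMove.notMem_Phi (h : legalMove G c v x) : x ∉ Phi G c v :=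
  fun ⟨u, hvu, hu⟩ => h.2 u hvu hu

def Trapped (G : SimpleGraph V) (c : V → Option α) : Prop :=
  ∃ v, c v = none ∧ Phi G c v = Set.univ

section FlipPair

/-- The pair that the last vertex of an `n`-vertex winning path must see when the first one
sees `S`. -/
def flipPair (S : Set α) (n : ℕ) : Set α := if Even n then S else Sᶜ

lemma flipPair_flipPair (S : Set α) (m n : ℕ) :
    flipPair (flipPair S m) n = flipPair S (m + n) := by
  unfold flipPair
  by_cases hm : Even m <;> by_cases hn : Even n <;> simp [hm, hn, Nat.even_add]

lemma compl_flipPair (S : Set α) (n : ℕ) : (flipPair S n)ᶜ = flipPair S (n + 1) := by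
  unfold flipPair
  by_cases hn : Even n <;> simp [hn, Nat.even_add_one]

lemma flipPair_congr (S : Set α) {m n : ℕ} (h : m % 2 = n % 2) :
    flipPair S m = flipPair S n := by
  simp only [flipPair, Nat.even_iff, h]

lemma ncard_flipPair_le (hS : S.ncard ≤ 2) (hSc : Sᶜ.ncard ≤ 2) (n : ℕ) :
    (flipPair S n).ncard ≤ 2 ∧ (flipPair S n)ᶜ.ncard ≤ 2 := by
  unfold flipPair
  split_ifs <;> simp [hS, hSc]

lemma exists_repair_color [Finite α] {S T : Set α} (hS : S.ncard ≤ 2) (hT : T ≠ Set.univ) :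
    ∃ y ∉ T, (S ∩ T).Nonempty → S ⊆ insert y T := by
  by_cases hST : S ⊆ T
  · obtain ⟨y, hy⟩ := (Set.ne_univ_iff_exists_notMem T).1 hT
    exact ⟨y, hy, fun _ => hST.trans (Set.subset_insert y T)⟩
  obtain ⟨y, hyS, hyT⟩ := Set.not_subset.1 hST
  refine ⟨y, hyT, fun ⟨x, hxS, hxT⟩ => ?_⟩
  have hxy : x ≠ y := by rintro rfl; exact hyT hxT
  have hS_eq : {x, y} = S := Set.eq_of_subset_of_ncard_le
    (Set.insert_subset hxS (Set.singleton_subset_iff.2 hyS)) (by rwa [Set.ncard_pair hxy])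
  rw [← hS_eq]
  exact Set.insert_subset (Set.mem_insert_of_mem y hxT)
    (Set.singleton_subset_iff.2 (Set.mem_insert y T))

end FlipPair

section Leaves

variable [Fintype V] [DecidableRel G.Adj]

variable (G) in
def uncoloredLeaves (c : V → Option α) (w : V) : Set V :=
  {u | G.Adj w u ∧ G.degree u = 1 ∧ c u = none}

lemma eq_of_mem_uncoloredLeaves (hu : u ∈ uncoloredLeaves G c w) (h : G.Adj u v) : v = w := by
  obtain ⟨z, -, hz⟩ := SimpleGraph.degree_eq_one_iff_existsUnique_adj.1 hu.2.1
  exact (hz v h).trans (hz w hu.1.symm).symm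

lemma legalMove_of_mem_uncoloredLeaves (hu : u ∈ uncoloredLeaves G c w) (hw : c w = none)
    (y : α) : legalMove G c u y :=
  ⟨hu.2.2, fun z hz => by simp [eq_of_mem_uncoloredLeaves hu hz, hw]⟩

lemma notMem_uncoloredLeaves (h : 2 ≤ G.degree u) : u ∉ uncoloredLeaves G c w :=
  fun hu => by simp [hu.2.1] at h

variable (G) in
/-- Two leaves per colour missing at `w` let Bob answer each Alice move on a `w`-leaf with a new
colour on another `w`-leaf; `k` is a deficit of leaves that Bob's next move makes up. -/
def LeafBudget (c : V → Option α) (w : V) (k : ℕ) : Prop :=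
  2 * (Nat.card α - (Phi G c w).ncard) ≤ (uncoloredLeaves G c w).ncard + k

lemma LeafBudget.mono {k' : ℕ} (h : LeafBudget G c w k) (hk : k ≤ k') : LeafBudget G c w k' := by
  unfold LeafBudget at *
  omega

lemma LeafBudget.nonempty_uncoloredLeaves [Finite α] (h : LeafBudget G c w 1)
    (hΦ : Phi G c w ≠ Set.univ) : (uncoloredLeaves G c w).Nonempty := by
  have := Set.ncard_lt_card hΦ
  rw [← Set.ncard_pos]
  unfold LeafBudget at h
  omega

variable (G) in
/-- The part of the invariant that no move off the path can break. -/
structure PathFrame (c : V → Option α) (S : Set α) (l : List V) : Prop where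
  ne_nil : l ≠ []
  isChain : l.IsChain G.Adj
  nodup : l.Nodup
  uncolored : ∀ w ∈ l, c w = none
  two_le_degree : ∀ w ∈ l, 2 ≤ G.degree w
  ncard_le : S.ncard ≤ 2
  ncard_compl_le : Sᶜ.ncard ≤ 2
  last : ∀ z ∈ l.getLast?, flipPair S l.length ⊆ Phi G c z

variable (G) in
structure WinningPath (c : V → Option α) (S : Set α) (l : List V) : Prop
    extends PathFrame G c S l where
  head : ∀ z ∈ l.head?, S ⊆ Phi G c z
  budget : ∀ w ∈ l, LeafBudget G c w 0

lemma WinningPath.reverse (h : WinningPath G c S l) :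
    WinningPath G c (flipPair S l.length) l.reverse := by
  obtain ⟨hS, hSc⟩ := ncard_flipPair_le h.ncard_le h.ncard_compl_le l.length
  refine ⟨⟨by simpa using h.ne_nil, List.isChain_reverse.2 (h.isChain.imp fun _ _ h => h.symm),
    List.nodup_reverse.2 h.nodup, fun w hw => h.uncolored w (List.mem_reverse.1 hw),
    fun w hw => h.two_le_degree w (List.mem_reverse.1 hw), hS, hSc, fun z hz => ?_⟩,
    fun z hz => ?_, fun w hw => h.budget w (List.mem_reverse.1 hw)⟩
  · rw [List.getLast?_reverse] at hz
    rw [List.length_reverse, flipPair_flipPair, flipPair, if_pos (by simp)]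
    exact h.head z hz
  · rw [List.head?_reverse] at hz
    exact h.last z hz

lemma WinningPath.trapped_or_exists_legalMove [Finite α] (h : WinningPath G c S l) :
    Trapped G c ∨ ∃ v x, legalMove G c v x := by
  have hm := List.head_mem h.ne_nil
  by_cases hΦ : Phi G c (l.head h.ne_nil) = Set.univ
  · exact .inl ⟨_, h.uncolored _ hm, hΦ⟩
  obtain ⟨u, hu⟩ := ((h.budget _ hm).mono zero_le_one).nonempty_uncoloredLeaves hΦ
  obtain ⟨y, -⟩ := (Set.ne_univ_iff_exists_notMem _).1 hΦ
  exact .inr ⟨u, y, legalMove_of_mem_uncoloredLeaves hu (h.uncolored _ hm) y⟩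

end Leaves

variable [DecidableEq V]

section Moves

@[simp] lemma applyMove_self (c : V → Option α) (v : V) (x : α) : applyMove c v x v = some x :=
  Function.update_self ..

lemma applyMove_of_ne (h : u ≠ v) (c : V → Option α) (x : α) : applyMove c v x u = c u :=
  Function.update_of_ne h ..

lemma applyMove_eq_none : applyMove c v x u = none ↔ c u = none ∧ u ≠ v := by
  by_cases h : u = v
  · subst h; simp
  · simp [applyMove_of_ne h, h]

lemma Phi_subset_Phi_applyMove (hv : c v = none) (w : V) (x : α) :
    Phi G c w ⊆ Phi G (applyMove c v x) w := by
  rintro a ⟨u, hwu, hu⟩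
  refine ⟨u, hwu, ?_⟩
  rwa [applyMove_of_ne (by rintro rfl; simp_all)]

lemma mem_Phi_applyMove (h : G.Adj w v) (c : V → Option α) (x : α) :
    x ∈ Phi G (applyMove c v x) w :=
  ⟨v, h, applyMove_self ..⟩

lemma ncard_uncolored_applyMove_lt [Finite V] (hv : c v = none) :
    {u | applyMove c v x u = none}.ncard < {u | c u = none}.ncard := by
  have : {u | applyMove c v x u = none} = {u | c u = none} \ {v} := by
    ext u; simp [applyMove_eq_none]
  rw [this]
  exact Set.ncard_sdiff_singleton_lt_of_mem hv

lemma Trapped.applyMove (h : Trapped G c) (hvx : legalMove G c v x) :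
    Trapped G (applyMove c v x) := by
  obtain ⟨w, hw, hΦ⟩ := h
  have hwv : w ≠ v := by
    rintro rfl
    exact hvx.notMem_Phi (hΦ ▸ Set.mem_univ x)
  refine ⟨w, by rwa [applyMove_of_ne hwv], ?_⟩
  exact Set.eq_univ_of_univ_subset (hΦ ▸ Phi_subset_Phi_applyMove hvx.1 w x)

theorem bobWins_of_trapped [Finite V] {c : V → Option α} (h : Trapped G c) (p : Player) :
    BobWins G p c := by
  by_cases hmove : ∃ v x, legalMove G c v x
  · cases p with
    | alice => exact .aliceMove c hmove fun v x hvx => bobWins_of_trapped (h.applyMove hvx) .bob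
    | bob =>
      obtain ⟨v, x, hvx⟩ := hmove
      exact .bobMove c v x hvx (bobWins_of_trapped (h.applyMove hvx) .alice)
  · simp only [not_exists] at hmove
    obtain ⟨v, hv, -⟩ := h
    exact .endPos p c hmove ⟨v, hv⟩
termination_by {v | c v = none}.ncard
decreasing_by all_goals exact ncard_uncolored_applyMove_lt hvx.1

end Moves

section Strategy

variable [Fintype V] [DecidableRel G.Adj]

lemma uncoloredLeaves_applyMove :
    uncoloredLeaves G (applyMove c v x) w = uncoloredLeaves G c w \ {v} := by
  ext u
  simp only [uncoloredLeaves, applyMove_eq_none, Set.mem_sdiff, Set.mem_ofPred_eq,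
    Set.mem_singleton_iff]
  tauto

lemma PathFrame.applyMove_of_notMem (h : PathFrame G c S l) (hv : c v = none) (hvl : v ∉ l)
    (x : α) : PathFrame G (applyMove c v x) S l where
  __ := h
  uncolored w hw := by rw [applyMove_of_ne (by rintro rfl; exact hvl hw)]; exact h.uncolored w hw
  last z hz := (h.last z hz).trans (Phi_subset_Phi_applyMove hv z x)

variable (G) in
def BobCanRestore (c : V → Option α) : Prop :=
  Trapped G c ∨ ∃ u y S l, legalMove G c u y ∧ WinningPath G (applyMove c u y) S l

variable [Finite α]

lemma LeafBudget.applyMove_of_notMem (h : LeafBudget G c w k) (hv : c v = none)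
    (hvw : v ∉ uncoloredLeaves G c w) (x : α) : LeafBudget G (applyMove c v x) w k := by
  have hΦ := Set.ncard_le_ncard (Phi_subset_Phi_applyMove (G := G) hv w x)
  unfold LeafBudget at *
  rw [uncoloredLeaves_applyMove, Set.sdiff_singleton_eq_self hvw]
  omega

lemma LeafBudget.applyMove_of_mem (h : LeafBudget G c w k) (hv : v ∈ uncoloredLeaves G c w)
    (x : α) : LeafBudget G (applyMove c v x) w (k + 1) := by
  have hΦ := Set.ncard_le_ncard (Phi_subset_Phi_applyMove (G := G) hv.2.2 w x)
  have hL := Set.ncard_sdiff_singleton_add_one hv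
  unfold LeafBudget at *
  rw [uncoloredLeaves_applyMove]
  omega

lemma LeafBudget.applyMove_leaf (h : LeafBudget G c w (k + 1))
    (hu : u ∈ uncoloredLeaves G c w) (hy : y ∉ Phi G c w) :
    LeafBudget G (applyMove c u y) w k := by
  have hΦ : insert y (Phi G c w) ⊆ Phi G (applyMove c u y) w :=
    Set.insert_subset (mem_Phi_applyMove hu.1 c y) (Phi_subset_Phi_applyMove hu.2.2 w y)
  have hΦcard := Set.ncard_le_ncard hΦ
  rw [Set.ncard_insert_of_notMem hy] at hΦcard
  have hL := Set.ncard_sdiff_singleton_add_one hu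
  have hα := Set.ncard_le_card (Phi G (applyMove c u y) w)
  unfold LeafBudget at *
  rw [uncoloredLeaves_applyMove]
  omega

lemma WinningPath.suffix_applyMove {l₁ l₂ : List V} (h : WinningPath G c S (l₁ ++ v :: l₂))
    (hvx : legalMove G c v x) (hx : x ∈ flipPair S (l₁.length + 1)) :
    PathFrame G (applyMove c v x) (flipPair S (l₁.length + 1)) l₂ ∧
      (∀ w ∈ l₂, LeafBudget G (applyMove c v x) w 0) ∧
      ∀ z ∈ l₂.head?, x ∈ Phi G (applyMove c v x) z := by
  obtain ⟨-, hvl₂_chain, -⟩ := List.isChain_append.1 h.isChain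
  obtain ⟨hv_head, hl₂_chain⟩ := List.isChain_cons.1 hvl₂_chain
  obtain ⟨hvl₂, hl₂_nodup⟩ := List.nodup_cons.1 (List.nodup_append.1 h.nodup).2.1
  have hmem : ∀ w ∈ l₂, w ∈ l₁ ++ v :: l₂ := fun w hw => by simp [hw]
  have hl₂ : l₂ ≠ [] := by
    rintro rfl
    exact hvx.notMem_Phi (h.last v (by simp) (by simpa using hx))
  obtain ⟨hS, hSc⟩ := ncard_flipPair_le h.ncard_le h.ncard_compl_le (l₁.length + 1)
  have hframe : PathFrame G c (flipPair S (l₁.length + 1)) l₂ := by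
    refine ⟨hl₂, hl₂_chain, hl₂_nodup, fun w hw => h.uncolored w (hmem w hw),
      fun w hw => h.two_le_degree w (hmem w hw), hS, hSc, fun z hz => ?_⟩
    have hlast : (l₁ ++ v :: l₂).getLast? = l₂.getLast? := by
      rw [← List.singleton_append, ← List.append_assoc, List.getLast?_append_of_ne_nil _ hl₂]
    rw [flipPair_flipPair]
    convert h.last z (hlast ▸ hz) using 2
    simp only [List.length_append, List.length_cons]
    omega
  have hv_leaf w : v ∉ uncoloredLeaves G c w :=
    notMem_uncoloredLeaves (h.two_le_degree v (by simp))
  exact ⟨hframe.applyMove_of_notMem hvx.1 hvl₂ x,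
    fun w hw => (h.budget w (hmem w hw)).applyMove_of_notMem hvx.1 (hv_leaf w) x,
    fun z hz => mem_Phi_applyMove (hv_head z hz).symm c x⟩

lemma PathFrame.winningPath_applyMove_leaf (h : PathFrame G c S l) (hm : m ∈ l)
    (hu : u ∈ uncoloredLeaves G c m) (hy : y ∉ Phi G c m)
    (hbudget : ∀ w ∈ l, w ≠ m → LeafBudget G c w 0) (hbudget_m : LeafBudget G c m 1)
    (hhead : ∀ z ∈ l.head?, S ⊆ Phi G c z ∨ z = m ∧ S ⊆ insert y (Phi G c z)) :
    WinningPath G (applyMove c u y) S l := by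
  have hul : u ∉ l := fun hul => by simpa [hu.2.1] using h.two_le_degree u hul
  have hΦ z := Phi_subset_Phi_applyMove (G := G) hu.2.2 z y
  refine ⟨h.applyMove_of_notMem hu.2.2 hul y, fun z hz => ?_, fun w hw => ?_⟩
  · rcases hhead z hz with hS | ⟨rfl, hS⟩
    · exact hS.trans (hΦ z)
    · exact hS.trans (Set.insert_subset (mem_Phi_applyMove hu.1 c y) (hΦ z))
  · by_cases hwm : w = m
    · subst hwm
      exact hbudget_m.applyMove_leaf hu hy
    · exact (hbudget w hw hwm).applyMove_of_notMem hu.2.2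
        (fun huw => hwm (eq_of_mem_uncoloredLeaves huw hu.1.symm).symm) y

lemma PathFrame.bobCanRestore (h : PathFrame G c S l) (hm : m ∈ l)
    (hbudget : ∀ w ∈ l, w ≠ m → LeafBudget G c w 0) (hbudget_m : LeafBudget G c m 1)
    (hhead : ∀ z ∈ l.head?, S ⊆ Phi G c z ∨ z = m ∧ (S ∩ Phi G c z).Nonempty) :
    BobCanRestore G c := by
  by_cases hΦ : Phi G c m = Set.univ
  · exact .inl ⟨m, h.uncolored m hm, hΦ⟩
  obtain ⟨y, hy, hrepair⟩ := exists_repair_color h.ncard_le hΦ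
  obtain ⟨u, hu⟩ := hbudget_m.nonempty_uncoloredLeaves hΦ
  refine .inr ⟨u, y, S, l, legalMove_of_mem_uncoloredLeaves hu (h.uncolored m hm) y,
    h.winningPath_applyMove_leaf hm hu hy hbudget hbudget_m fun z hz => ?_⟩
  rcases hhead z hz with hS | ⟨rfl, hS⟩
  · exact .inl hS
  · exact .inr ⟨rfl, hrepair hS⟩

lemma WinningPath.bobCanRestore_of_suffix {l₁ l₂ : List V}
    (h : WinningPath G c S (l₁ ++ v :: l₂)) (hvx : legalMove G c v x)
    (hx : x ∈ flipPair S (l₁.length + 1)) : BobCanRestore G (applyMove c v x) := by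
  obtain ⟨hframe, hbudget, hhead⟩ := h.suffix_applyMove hvx hx
  have hne := hframe.ne_nil
  refine hframe.bobCanRestore (List.head_mem hne) (fun w hw _ => hbudget w hw)
    ((hbudget _ (List.head_mem hne)).mono zero_le_one) fun z hz => .inr ⟨?_, x, hx, hhead z hz⟩
  rw [List.head?_eq_some_head hne, Option.mem_some_iff] at hz
  exact hz.symm

lemma WinningPath.bobCanRestore_of_mem (h : WinningPath G c S l) (hvx : legalMove G c v x)
    (hvl : v ∈ l) : BobCanRestore G (applyMove c v x) := by
  obtain ⟨l₁, l₂, rfl⟩ := List.append_of_mem hvl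
  by_cases hx : x ∈ flipPair S (l₁.length + 1)
  · exact h.bobCanRestore_of_suffix hvx hx
  -- The reversed prefix requires the complementary pair next to `v`.
  have hrev := h.reverse
  rw [List.reverse_append, List.reverse_cons, List.append_assoc, List.singleton_append] at hrev
  refine hrev.bobCanRestore_of_suffix hvx ?_
  rw [flipPair_flipPair, flipPair_congr S (n := l₁.length + 1 + 1) (by simp; omega),
    ← compl_flipPair]
  exact hx

lemma WinningPath.bobCanRestore_of_notMem (h : WinningPath G c S l) (hv : c v = none)
    (hvl : v ∉ l) (x : α) : BobCanRestore G (applyMove c v x) := by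
  have hframe := h.applyMove_of_notMem hv hvl x
  have hhead z (hz : z ∈ l.head?) : S ⊆ Phi G (applyMove c v x) z :=
    (h.head z hz).trans (Phi_subset_Phi_applyMove hv z x)
  by_cases hleaf : ∃ m ∈ l, v ∈ uncoloredLeaves G c m
  · obtain ⟨m, hm, hvm⟩ := hleaf
    refine hframe.bobCanRestore hm (fun w hw hwm => ?_) ((h.budget m hm).applyMove_of_mem hvm x)
      fun z hz => .inl (hhead z hz)
    exact (h.budget w hw).applyMove_of_notMem hv
      (fun hvw => hwm (eq_of_mem_uncoloredLeaves hvm hvw.1.symm)) x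
  push Not at hleaf
  have hbudget w (hw : w ∈ l) : LeafBudget G (applyMove c v x) w 0 :=
    (h.budget w hw).applyMove_of_notMem hv (hleaf w hw) x
  exact hframe.bobCanRestore (List.head_mem h.ne_nil) (fun w hw _ => hbudget w hw)
    ((hbudget _ (List.head_mem h.ne_nil)).mono zero_le_one) fun z hz => .inl (hhead z hz)

lemma WinningPath.bobCanRestore (h : WinningPath G c S l) (hvx : legalMove G c v x) :
    BobCanRestore G (applyMove c v x) := by
  by_cases hvl : v ∈ l
  · exact h.bobCanRestore_of_mem hvx hvl
  · exact h.bobCanRestore_of_notMem hvx.1 hvl x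

theorem WinningPath.bobWins {c : V → Option α} {S : Set α} {l : List V}
    (h : WinningPath G c S l) : BobWins G .alice c := by
  obtain htrap | hmove := h.trapped_or_exists_legalMove
  · exact bobWins_of_trapped htrap _
  refine .aliceMove c hmove fun v x hvx => ?_
  obtain htrap | ⟨u, y, S', l', huy, h'⟩ := h.bobCanRestore hvx
  · exact bobWins_of_trapped htrap _
  · exact .bobMove _ u y huy h'.bobWins
termination_by {v | c v = none}.ncard
decreasing_by
  exact (ncard_uncolored_applyMove_lt huy.1).trans (ncard_uncolored_applyMove_lt hvx.1)

end Strategy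

end GCN

open GCN in
theorem statement3_general {V : Type} [Fintype V] [DecidableEq V]
    (G : SimpleGraph V) [DecidableRel G.Adj]
    (c : V → Option (Fin 4))
    {v₀ vd : V} (P : G.Walk v₀ vd) (hP : P.IsPath)
    (huncol : ∀ v ∈ P.support, c v = none)
    (hdeg : ∀ v ∈ P.support, 2 ≤ G.degree v)
    (hleaves : ∀ v ∈ P.support,
      8 ≤ {u : V | G.Adj v u ∧ G.degree u = 1 ∧ c u = none}.ncard)
    (a b : Fin 4) (hab : a ≠ b) (h₀ : {a, b} ⊆ Phi G c v₀)
    (hcond : (Odd P.length ∧ {a, b} ⊆ Phi G c vd) ∨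
             (Even P.length ∧ ({a, b}ᶜ : Set (Fin 4)) ⊆ Phi G c vd)) :
    BobWins G .alice c := by
  have hlast : flipPair {a, b} P.support.length ⊆ Phi G c vd := by
    rw [P.length_support, flipPair]
    rcases hcond with ⟨hodd, hsub⟩ | ⟨heven, hsub⟩
    · rwa [if_pos hodd.add_one]
    · rwa [if_neg (Nat.not_even_iff_odd.2 heven.add_one)]
  refine WinningPath.bobWins (S := {a, b}) (l := P.support)
    ⟨⟨P.support_ne_nil, P.isChain_adj_support, hP.support_nodup, huncol, hdeg,
      (Set.ncard_pair hab).le, ?_, fun z hz => ?_⟩, fun z hz => ?_, fun w hw => ?_⟩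
  · rw [Set.ncard_compl, Set.ncard_pair hab]
    simp
  · rw [List.getLast?_eq_some_getLast P.support_ne_nil, P.getLast_support,
      Option.mem_some_iff] at hz
    exact hz ▸ hlast
  · rw [List.head?_eq_some_head P.support_ne_nil, P.head_support, Option.mem_some_iff] at hz
    exact hz ▸ h₀
  · have h8 : 8 ≤ (uncoloredLeaves G c w).ncard := hleaves w hw
    unfold LeafBudget
    simp only [Nat.card_eq_fintype_card, Fintype.card_fin]
    omega

open GCN in
/-- Winning path lemma.  With 4 colors (`Fin 4`), suppose the position `c` is a partial proper
coloring, Alice to move, and `G` contains a path `P` from `v₀` to `v_d` all of whose vertices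
are uncolored, have degree at least 2 and have at least 8 uncolored pendant neighbors.  If
`{a, b} ⊆ Φ(v₀)` for distinct colors `a, b`, and either the length `d` of `P` is odd and
`{a, b} ⊆ Φ(v_d)`, or `d` is even and the two colors other than `a, b` are in `Φ(v_d)`, then
Bob wins. -/
theorem statement3 {V : Type} [Fintype V] [DecidableEq V]
    (G : SimpleGraph V) [DecidableRel G.Adj]
    (c : V → Option (Fin 4)) (hc : ProperPartial G c)
    {v₀ vd : V} (P : G.Walk v₀ vd) (hP : P.IsPath)
    (huncol : ∀ v ∈ P.support, c v = none)
    (hdeg : ∀ v ∈ P.support, 2 ≤ G.degree v)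
    (hleaves : ∀ v ∈ P.support,
      8 ≤ {u : V | G.Adj v u ∧ G.degree u = 1 ∧ c u = none}.ncard)
    (a b : Fin 4) (hab : a ≠ b) (h₀ : {a, b} ⊆ Phi G c v₀)
    (hcond : (Odd P.length ∧ {a, b} ⊆ Phi G c vd) ∨
             (Even P.length ∧ ({a, b}ᶜ : Set (Fin 4)) ⊆ Phi G c vd)) :
    BobWins G .alice c :=
  statement3_general G c P hP huncol hdeg hleaves a b hab h₀ hcond
end

section
/- For every odd integer ℓ ≥ 3 and every integer p ≥ 1, the graph G(ℓ, p) is a cactus, its girth equals ℓ, and its cycle-distance equals 2p. Moreover every cycle of G(ℓ, p) is odd and every vertex of G(ℓ, p) that is not a leaf has at least 8 pendant neighbors. -/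
namespace GCN

/-- A cactus is a graph in which every edge belongs to at most one cycle; equivalently, any two
cycles sharing an edge have the same edge set. -/
def IsCactus {V : Type} (G : SimpleGraph V) : Prop :=
  ∀ ⦃u v : V⦄ (c₁ : G.Walk u u) (c₂ : G.Walk v v), c₁.IsCycle → c₂.IsCycle →
    ∀ e : Sym2 V, e ∈ c₁.edges → e ∈ c₂.edges →
      ∀ e' : Sym2 V, e' ∈ c₁.edges ↔ e' ∈ c₂.edges

/-- The cycle-distance of a graph : the minimum length of a path whose two endpoints lie on
two different cycles (cycles being identified with their edge sets), as an `ℕ∞`. -/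
noncomputable def cycleDistance {V : Type} (G : SimpleGraph V) : ℕ∞ :=
  ⨅ (u : V) (v : V) (c₁ : G.Walk u u) (c₂ : G.Walk v v) (_ : c₁.IsCycle) (_ : c₂.IsCycle)
    (_ : ¬ ∀ e : Sym2 V, e ∈ c₁.edges ↔ e ∈ c₂.edges) (P : G.Walk u v) (_ : P.IsPath),
    (P.length : ℕ∞)

end GCN

namespace GCN

/-- Vertices of one copy of the core construction : either one of the five spine vertices
`x y z y' x'` (indexed by `Fin 5`), or a vertex of one of the two attachments of a spine
vertex.  An attachment is a path of length `p` from the spine vertex to an `ℓ`-cycle : its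
vertices are the `p - 1` interior path vertices (`Fin (p - 1)`, the vertex indexed by `i`
being at distance `i + 1` from the spine vertex) together with the `ℓ` cycle vertices
(`Fin ℓ`, the cycle vertex `0` being the endpoint of the attaching path). -/
abbrev BaseV (ℓ p : ℕ) : Type := Fin 5 ⊕ Fin 5 × Fin 2 × (Fin (p - 1) ⊕ Fin ℓ)

/-- Vertices of the two disjoint copies of the core construction. -/
abbrev CoreV (ℓ p : ℕ) : Type := Bool × BaseV ℓ p

/-- Vertices of the graph `G(ℓ, p)` : a core vertex `v` is represented by `(v, none)`, and its
eight pendant leaves are `(v, some i)` for `i : Fin 8`. -/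
abbrev GV (ℓ p : ℕ) : Type := CoreV ℓ p × Option (Fin 8)

/-- The adjacency relation of one copy of the core construction. -/
def baseAdj (ℓ p : ℕ) : BaseV ℓ p → BaseV ℓ p → Prop
  | .inl s, .inl t => s.val + 1 = t.val ∨ t.val + 1 = s.val
  | .inl s, .inr (s', _, .inl i) => s = s' ∧ i.val = 0
  | .inr (s', _, .inl i), .inl s => s = s' ∧ i.val = 0
  | .inl s, .inr (s', _, .inr c) => s = s' ∧ p = 1 ∧ c.val = 0
  | .inr (s', _, .inr c), .inl s => s = s' ∧ p = 1 ∧ c.val = 0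
  | .inr (s, j, .inl i), .inr (s', j', .inl i') =>
      s = s' ∧ j = j' ∧ (i.val + 1 = i'.val ∨ i'.val + 1 = i.val)
  | .inr (s, j, .inl i), .inr (s', j', .inr d) =>
      s = s' ∧ j = j' ∧ i.val + 1 = p - 1 ∧ d.val = 0
  | .inr (s, j, .inr d), .inr (s', j', .inl i) =>
      s = s' ∧ j = j' ∧ i.val + 1 = p - 1 ∧ d.val = 0
  | .inr (s, j, .inr d), .inr (s', j', .inr d') =>
      s = s' ∧ j = j' ∧ ((d.val + 1) % ℓ = d'.val ∨ (d'.val + 1) % ℓ = d.val)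

/-- The adjacency relation of `G(ℓ, p)` : core vertices are adjacent within the same copy
according to `baseAdj`, and each leaf is adjacent exactly to the core vertex it hangs from. -/
def gAdj (ℓ p : ℕ) : GV ℓ p → GV ℓ p → Prop
  | ((b, x), none), ((b', y), none) => b = b' ∧ baseAdj ℓ p x y
  | (v, none), (w, some _) => v = w
  | (v, some _), (w, none) => v = w
  | (_, some _), (_, some _) => False

/-- The graph `G(ℓ, p)` : a path on five vertices `x y z y' x'`, two cycles of length `ℓ`
attached to each of these five vertices by paths of length `p`, all of this taken in two
disjoint copies, and 8 pendant leaves attached to every vertex. -/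
def GraphLP (ℓ p : ℕ) : SimpleGraph (GV ℓ p) := SimpleGraph.fromRel (gAdj ℓ p)

instance (ℓ p : ℕ) : DecidableEq (GV ℓ p) := instDecidableEqProd

instance (ℓ p : ℕ) : Fintype (GV ℓ p) := instFintypeProd _ _

noncomputable instance (ℓ p : ℕ) : DecidableRel (GraphLP ℓ p).Adj := Classical.decRel _

end GCN

/-!
Every edge of `G(ℓ, p)` off the rings is a bridge: the part of the graph hanging below it is
joined to the rest by that edge alone. So a cycle uses ring edges only, stays in one ring, and,
since each of its vertices has two distinct cycle neighbours, it is the whole ring. This gives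
the cactus property, the girth and the parity of cycles. The depth of a vertex, negated outside
a fixed branch, changes by at most one along an edge and equals `p` and `-p` on two rings of
different branches, so they are at distance at least `2p`; the two rings hanging from a common
spine vertex are at distance exactly `2p`.
-/

namespace SimpleGraph

variable {V : Type*} {G : SimpleGraph V}

theorem isBridge_of_unique_crossing {S : Set V} {x y : V} (hx : x ∈ S) (hy : y ∉ S)
    (h : ∀ a b, G.Adj a b → a ∈ S → b ∉ S → a = x ∧ b = y) : G.IsBridge s(x, y) := by
  refine isBridge_iff_forall_walk_mem_edges.mpr fun w => ?_
  obtain ⟨d, hd, hdS, hdS'⟩ := w.exists_boundary_dart S hx hy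
  obtain ⟨h₁, h₂⟩ := h _ _ d.adj hdS hdS'
  have hedge : d.edge = s(x, y) := by rw [Dart.edge, ← h₁, ← h₂]
  exact hedge ▸ List.mem_map_of_mem hd

theorem Walk.le_add_length {f : V → ℤ} (hf : ∀ a b, G.Adj a b → f a ≤ f b + 1) {u v : V}
    (w : G.Walk u v) : f u ≤ f v + w.length := by
  induction w with
  | nil => simp
  | cons h _ ih =>
    rw [Walk.length_cons]
    push_cast
    linarith [hf _ _ h]

theorem Walk.mem_of_mem_support_of_closed {S : Set V} {u v : V} (w : G.Walk u v) (hu : u ∈ S)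
    (h : ∀ a b, s(a, b) ∈ w.edges → a ∈ S → b ∈ S) : ∀ z ∈ w.support, z ∈ S := by
  induction w with
  | nil => simpa using hu
  | cons hadj w ih =>
    intro z hz
    rw [Walk.support_cons, List.mem_cons] at hz
    rcases hz with rfl | hz
    · exact hu
    · exact ih (h _ _ (by simp) hu) (fun a b hab => h a b (by simp [hab])) z hz

end SimpleGraph

namespace GCN
open SimpleGraph

variable {V : Type} {G : SimpleGraph V}

theorem cycleDistance_le {u v : V} {c₁ : G.Walk u u} {c₂ : G.Walk v v} (hc₁ : c₁.IsCycle)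
    (hc₂ : c₂.IsCycle) (hne : ¬ ∀ e, e ∈ c₁.edges ↔ e ∈ c₂.edges) (P : G.Walk u v)
    (hP : P.IsPath) : cycleDistance G ≤ P.length :=
  iInf_le_of_le u <| iInf_le_of_le v <| iInf_le_of_le c₁ <| iInf_le_of_le c₂ <|
    iInf_le_of_le hc₁ <| iInf_le_of_le hc₂ <| iInf_le_of_le hne <| iInf_le_of_le P <|
      iInf_le _ hP

theorem le_cycleDistance {n : ℕ∞}
    (h : ∀ (u v : V) (c₁ : G.Walk u u) (c₂ : G.Walk v v), c₁.IsCycle → c₂.IsCycle →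
      (¬ ∀ e, e ∈ c₁.edges ↔ e ∈ c₂.edges) → ∀ P : G.Walk u v, P.IsPath → n ≤ P.length) :
    n ≤ cycleDistance G := by
  simp only [cycleDistance, le_iInf_iff]
  exact h

variable {ℓ p : ℕ}

/-- A branch `(b, s, j)`: the `j`-th cycle attached to the spine vertex `s` of copy `b`. -/
abbrev Branch : Type := Bool × Fin 5 × Fin 2

def ringV (k : Branch) (d : Fin ℓ) : CoreV ℓ p := (k.1, .inr (k.2.1, k.2.2, .inr d))

/-- The vertex at distance `m` from the spine along the attaching path of branch `k` (the ring
vertex `0` once `m ≥ p`). -/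
def armV [NeZero ℓ] (k : Branch) : ℕ → CoreV ℓ p
  | 0 => (k.1, .inl k.2.1)
  | m + 1 => (k.1, if h : m < p - 1 then .inr (k.2.1, k.2.2, .inl ⟨m, h⟩)
      else .inr (k.2.1, k.2.2, .inr 0))

def branch : CoreV ℓ p → Option Branch
  | (b, .inr (s, j, _)) => some (b, s, j)
  | (_, .inl _) => none

def depth : CoreV ℓ p → ℕ
  | (_, .inl _) => 0
  | (_, .inr (_, _, .inl i)) => i.val + 1
  | (_, .inr (_, _, .inr _)) => p

def spinePos : CoreV ℓ p → ℕ
  | (_, .inl s) => s.val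
  | (_, .inr (s, _, _)) => s.val

variable [NeZero ℓ]

/-- The edges of `GraphLP ℓ p`, each listed in one orientation. -/
inductive Link : GV ℓ p → GV ℓ p → Prop
  | leaf (x : CoreV ℓ p) (i : Fin 8) : Link (x, none) (x, some i)
  | spine (b : Bool) (s t : Fin 5) (h : s.val + 1 = t.val) :
      Link ((b, .inl s), none) ((b, .inl t), none)
  | arm (k : Branch) (m : ℕ) (h : m < p) : Link (armV k m, none) (armV k (m + 1), none)
  | ring (k : Branch) (d : Fin ℓ) : Link (ringV k d, none) (ringV k (d + 1), none)

lemma armV_zero (k : Branch) : armV (ℓ := ℓ) (p := p) k 0 = (k.1, .inl k.2.1) := rfl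

lemma depth_armV (k : Branch) {m : ℕ} (hm : m ≤ p) : depth (armV (ℓ := ℓ) (p := p) k m) = m := by
  cases m with
  | zero => rfl
  | succ m =>
    by_cases h : m < p - 1
    · simp [armV, h, depth]
    · simp only [armV, h, dite_false, depth]
      omega

lemma branch_armV (k : Branch) {m : ℕ} (hm : m ≠ 0) :
    branch (armV (ℓ := ℓ) (p := p) k m) = some k := by
  obtain ⟨m, rfl⟩ := Nat.exists_eq_succ_of_ne_zero hm
  by_cases h : m < p - 1 <;> simp [armV, h, branch]

lemma armV_fst (k : Branch) (m : ℕ) : (armV (ℓ := ℓ) (p := p) k m).1 = k.1 := by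
  cases m <;> rfl

lemma spinePos_armV (k : Branch) (m : ℕ) : spinePos (armV (ℓ := ℓ) (p := p) k m) = k.2.1 := by
  cases m with
  | zero => rfl
  | succ m => by_cases h : m < p - 1 <;> simp [armV, h, spinePos]

lemma armV_of_le (k : Branch) {m : ℕ} (hm : p ≤ m + 1) :
    armV (ℓ := ℓ) (p := p) k (m + 1) = ringV k 0 := by
  simp [armV, ringV, show ¬ m < p - 1 by omega]

lemma val_add_one_mod_eq_iff (d d' : Fin ℓ) : (d.val + 1) % ℓ = d'.val ↔ d + 1 = d' := by
  rw [Fin.ext_iff, Fin.val_add, Fin.val_one', Nat.add_mod_mod]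

lemma Link.of_armV {k : Branch} {m : ℕ} {x y : CoreV ℓ p} (h : m < p) (hx : armV k m = x)
    (hy : armV k (m + 1) = y) : Link (x, none) (y, none) :=
  hx ▸ hy ▸ Link.arm k m h

lemma link_of_baseAdj (b : Bool) {x y : BaseV ℓ p} (h : baseAdj ℓ p x y) :
    Link ((b, x), none) ((b, y), none) ∨ Link ((b, y), none) ((b, x), none) := by
  rcases x with s | ⟨s, j, i | d⟩ <;> rcases y with t | ⟨t, j', i' | d'⟩ <;>
    simp only [baseAdj] at h
  · exact h.imp (Link.spine b s t) (Link.spine b t s)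
  · obtain ⟨rfl, hi⟩ := h
    exact .inl (.of_armV (k := (b, s, j')) (m := 0) (by omega) rfl (by simp [armV, ← hi]))
  · obtain ⟨rfl, hp, hd⟩ := h
    exact .inl (.of_armV (k := (b, s, j')) (m := 0) (by omega) rfl
      (by rw [armV_of_le _ (by omega)]; simp [ringV, Fin.ext_iff, hd]))
  · obtain ⟨rfl, hi⟩ := h
    exact .inr (.of_armV (k := (b, t, j)) (m := 0) (by omega) rfl (by simp [armV, ← hi]))
  · obtain ⟨rfl, rfl, hi | hi⟩ := h
    · exact .inl (.of_armV (k := (b, s, j)) (m := i.val + 1) (by omega) (by simp [armV])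
        (by simp [armV, hi]))
    · exact .inr (.of_armV (k := (b, s, j)) (m := i'.val + 1) (by omega) (by simp [armV])
        (by simp [armV, hi]))
  · obtain ⟨rfl, rfl, hi, hd⟩ := h
    exact .inl (.of_armV (k := (b, s, j)) (m := i.val + 1) (by omega) (by simp [armV])
      (by rw [armV_of_le _ (by omega)]; simp [ringV, Fin.ext_iff, hd]))
  · obtain ⟨rfl, hp, hd⟩ := h
    exact .inr (.of_armV (k := (b, t, j)) (m := 0) (by omega) rfl
      (by rw [armV_of_le _ (by omega)]; simp [ringV, Fin.ext_iff, hd]))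
  · obtain ⟨rfl, rfl, hi, hd⟩ := h
    exact .inr (.of_armV (k := (b, s, j)) (m := i'.val + 1) (by omega) (by simp [armV])
      (by rw [armV_of_le _ (by omega)]; simp [ringV, Fin.ext_iff, hd]))
  · obtain ⟨rfl, rfl, hd | hd⟩ := h
    · exact .inl ((val_add_one_mod_eq_iff d d').mp hd ▸ Link.ring (b, s, j) d)
    · exact .inr ((val_add_one_mod_eq_iff d' d).mp hd ▸ Link.ring (b, s, j) d')

lemma link_of_gAdj {a b : GV ℓ p} (h : gAdj ℓ p a b) : Link a b ∨ Link b a := by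
  rcases a with ⟨⟨b₁, x⟩, _ | i⟩ <;> rcases b with ⟨⟨b₂, y⟩, _ | j⟩ <;> simp only [gAdj] at h
  · obtain ⟨rfl, h⟩ := h
    exact link_of_baseAdj b₁ h
  · exact .inl (h ▸ Link.leaf _ j)
  · exact .inr (h ▸ Link.leaf _ i)

lemma link_of_adj {a b : GV ℓ p} (h : (GraphLP ℓ p).Adj a b) : Link a b ∨ Link b a :=
  ((fromRel_adj _ a b).mp h).2.elim link_of_gAdj fun h => (link_of_gAdj h).symm

omit [NeZero ℓ] in
lemma adj_leaf (x : CoreV ℓ p) (i : Fin 8) : (GraphLP ℓ p).Adj (x, none) (x, some i) :=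
  (fromRel_adj _ _ _).mpr ⟨by simp, .inl (by rcases x with ⟨_, _ | _⟩ <;> rfl)⟩

lemma adj_armV (k : Branch) {m : ℕ} (h : m < p) :
    (GraphLP ℓ p).Adj (armV k m, none) (armV k (m + 1), none) := by
  refine (fromRel_adj _ _ _).mpr ⟨fun he => ?_, .inl ?_⟩
  · have := congrArg (fun z : GV ℓ p => depth z.1) he
    simp only [depth_armV k h.le, depth_armV k h] at this
    omega
  · obtain ⟨b, s, j⟩ := k
    cases m with
    | zero => by_cases h' : 0 < p - 1 <;> simp [armV, h', gAdj, baseAdj]; omega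
    | succ m =>
      by_cases h' : m + 1 < p - 1
      · simp [armV, h', show m < p - 1 by omega, gAdj, baseAdj]
      · simp [armV, h', show m < p - 1 by omega, gAdj, baseAdj]
        omega

lemma adj_ringV (hℓ : 2 ≤ ℓ) (k : Branch) (d : Fin ℓ) :
    (GraphLP ℓ p).Adj (ringV k d, none) (ringV k (d + 1), none) := by
  refine (fromRel_adj _ _ _).mpr
    ⟨fun he => ?_, .inl ⟨rfl, rfl, rfl, .inl ((val_add_one_mod_eq_iff _ _).mpr rfl)⟩⟩
  simp [ringV, Fin.ext_iff, Nat.mod_eq_of_lt (by omega : 1 < ℓ)] at he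

lemma isBridge_of_link {S : Set (GV ℓ p)} {x y : GV ℓ p} (hx : x ∈ S) (hy : y ∉ S)
    (h : ∀ a c, Link a c → (a ∈ S ↔ c ∈ S) ∨ (a = y ∧ c = x)) :
    (GraphLP ℓ p).IsBridge s(x, y) := by
  refine isBridge_of_unique_crossing hx hy fun a c hac ha hc => ?_
  rcases link_of_adj hac with hl | hl
  · rcases h a c hl with hS | ⟨rfl, -⟩
    exacts [absurd (hS.mp ha) hc, absurd ha hy]
  · rcases h c a hl with hS | ⟨hcy, rfl⟩
    exacts [absurd (hS.mpr ha) hc, ⟨rfl, hcy⟩]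

lemma isBridge_leaf (x : CoreV ℓ p) (i : Fin 8) :
    (GraphLP ℓ p).IsBridge s((x, some i), (x, none)) := by
  refine isBridge_of_link (S := {(x, some i)}) rfl (by simp) fun a c h => ?_
  rcases h with ⟨y, j⟩ | _ | _ | _
  · by_cases hyj : y = x ∧ j = i
    · obtain ⟨rfl, rfl⟩ := hyj
      exact .inr ⟨rfl, rfl⟩
    · exact .inl (by simpa using hyj)
  all_goals exact .inl (by simp)

lemma isBridge_spine (b : Bool) (s t : Fin 5) (h : s.val + 1 = t.val) :
    (GraphLP ℓ p).IsBridge s(((b, .inl t), none), ((b, .inl s), none)) := by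
  refine isBridge_of_link (S := {z | z.1.1 = b ∧ t.val ≤ spinePos z.1})
    ⟨rfl, le_rfl⟩ (by simp [spinePos]; omega) fun a c h => ?_
  rcases h with ⟨y, j⟩ | ⟨b', s', t', h'⟩ | ⟨k, m, -⟩ | _
  · exact .inl Iff.rfl
  · by_cases hbt : b' = b ∧ t' = t
    · obtain ⟨rfl, rfl⟩ := hbt
      exact .inr ⟨by simp [Fin.ext_iff]; omega, rfl⟩
    · refine .inl ?_
      simp only [Set.mem_ofPred_eq, spinePos]
      by_cases hb : b' = b
      · simp only [hb, true_and, Fin.ext_iff] at hbt ⊢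
        omega
      · simp [hb]
  · exact .inl (by simp only [Set.mem_ofPred_eq, armV_fst, spinePos_armV])
  · exact .inl Iff.rfl

lemma isBridge_arm (k : Branch) {m : ℕ} (hm : m < p) :
    (GraphLP ℓ p).IsBridge s((armV k (m + 1), none), (armV k m, none)) := by
  have hS : ∀ {k' : Branch} {m' : ℕ}, m' ≤ p →
      (branch (armV (ℓ := ℓ) (p := p) k' m') = some k ∧ m < depth (armV (ℓ := ℓ) (p := p) k' m') ↔
        k' = k ∧ m < m') := by
    intro k' m' hm'
    rw [depth_armV k' hm']
    constructor
    · rintro ⟨hb, hmm⟩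
      rw [branch_armV k' (by omega)] at hb
      exact ⟨Option.some_injective _ hb, hmm⟩
    · rintro ⟨rfl, hmm⟩
      exact ⟨branch_armV _ (by omega), hmm⟩
  refine isBridge_of_link (S := {z | branch z.1 = some k ∧ m < depth z.1})
    ((hS hm).mpr ⟨rfl, by omega⟩) (fun h => by simpa using (hS hm.le).mp h)
    fun a c h => ?_
  rcases h with ⟨y, j⟩ | _ | ⟨k', m', h'⟩ | _
  · exact .inl Iff.rfl
  · exact .inl (by simp [branch])
  · by_cases hkm : k' = k ∧ m' = m
    · obtain ⟨rfl, rfl⟩ := hkm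
      exact .inr ⟨rfl, rfl⟩
    · refine .inl ?_
      simp only [Set.mem_ofPred_eq, hS h'.le, hS h']
      by_cases hk : k' = k
      · simp only [hk, true_and] at hkm ⊢
        omega
      · simp [hk]
  · exact .inl Iff.rfl

def ringEdge (k : Branch) (d : Fin ℓ) : Sym2 (GV ℓ p) :=
  s((ringV k d, none), (ringV k (d + 1), none))

omit [NeZero ℓ] in
lemma ringV_inj {k k' : Branch} {d d' : Fin ℓ} :
    (ringV k d : CoreV ℓ p) = ringV k' d' ↔ k = k' ∧ d = d' := by
  obtain ⟨b, s, j⟩ := k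
  obtain ⟨b', s', j'⟩ := k'
  simp [ringV, and_assoc]

lemma ringEdge_inj (hℓ : 3 ≤ ℓ) {k k' : Branch} {d d' : Fin ℓ} :
    (ringEdge k d : Sym2 (GV ℓ p)) = ringEdge k' d' ↔ k = k' ∧ d = d' := by
  refine ⟨fun h => ?_, by rintro ⟨rfl, rfl⟩; rfl⟩
  rcases Sym2.eq_iff.mp h with ⟨h₁, -⟩ | ⟨h₁, h₂⟩
  · simpa [ringV_inj] using h₁
  · obtain ⟨rfl, rfl⟩ : k = k' ∧ d = d' + 1 := by simpa [ringV_inj] using h₁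
    have h₂ : d' + 1 + 1 = d' := by simpa [ringV_inj] using h₂
    rw [add_assoc, add_eq_left, Fin.ext_iff, Fin.val_add, Fin.val_one',
      Nat.mod_eq_of_lt (by omega : 1 < ℓ)] at h₂
    simp [Nat.mod_eq_of_lt (by omega : 2 < ℓ)] at h₂

lemma eq_ringV_of_ringEdge_eq {k k' : Branch} {d d' : Fin ℓ} {y : GV ℓ p}
    (h : s((ringV k d, none), y) = ringEdge k' d') :
    k' = k ∧ (y = (ringV k (d + 1), none) ∨ y = (ringV k (d - 1), none)) := by
  rcases Sym2.eq_iff.mp h with ⟨h₁, h₂⟩ | ⟨h₁, h₂⟩ <;>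
    obtain ⟨rfl, rfl⟩ := ringV_inj.mp (Prod.mk.inj h₁).1
  · exact ⟨rfl, .inl h₂⟩
  · exact ⟨rfl, .inr (by simpa using h₂)⟩

lemma Link.isBridge_or_eq_ringEdge {a b : GV ℓ p} (h : Link a b) :
    (GraphLP ℓ p).IsBridge s(a, b) ∨ ∃ k d, s(a, b) = ringEdge k d := by
  cases h with
  | leaf x i => exact .inl (Sym2.eq_swap ▸ isBridge_leaf x i)
  | spine b s t h => exact .inl (Sym2.eq_swap ▸ isBridge_spine b s t h)
  | arm k m h => exact .inl (Sym2.eq_swap ▸ isBridge_arm k h)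
  | ring k d => exact .inr ⟨k, d, rfl⟩

variable {u : GV ℓ p} {c : (GraphLP ℓ p).Walk u u}

lemma exists_ringEdge_of_mem_edges (hc : c.IsCycle) {e : Sym2 (GV ℓ p)} (he : e ∈ c.edges) :
    ∃ k d, e = ringEdge k d := by
  induction e using Sym2.ind with | _ a b => ?_
  have key : ∀ {a b : GV ℓ p}, Link a b → s(a, b) ∈ c.edges → ∃ k d, s(a, b) = ringEdge k d :=
    fun h he => h.isBridge_or_eq_ringEdge.resolve_left fun hb => hb.notMem_edges_of_isCycle hc he
  rcases link_of_adj (c.adj_of_mem_edges he) with h | h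
  · exact key h he
  · rw [Sym2.eq_swap] at he ⊢
    exact key h he

lemma ringEdge_mem_edges_of_mem_support (hc : c.IsCycle) {k : Branch}
    (hE : ∀ e ∈ c.edges, ∃ d, e = ringEdge k d) {d : Fin ℓ}
    (hd : (ringV k d, none) ∈ c.support) : ringEdge k d ∈ c.edges := by
  obtain ⟨y, z, hyz, hN⟩ := Set.ncard_eq_two.mp (hc.ncard_neighborSet_toSubgraph_eq_two hd)
  have hnb : ∀ w ∈ ({y, z} : Set (GV ℓ p)),
      w = (ringV k (d + 1), none) ∨ w = (ringV k (d - 1), none) := by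
    intro w hw
    rw [← hN, Subgraph.mem_neighborSet, Walk.adj_toSubgraph_iff_mem_edges] at hw
    obtain ⟨d', hd'⟩ := hE _ hw
    exact (eq_ringV_of_ringEdge_eq hd').2
  have hfwd : (ringV k (d + 1), none) ∈ ({y, z} : Set (GV ℓ p)) := by
    rcases hnb y (by simp) with hy | hy
    · simp [hy]
    rcases hnb z (by simp) with hz | hz
    · simp [hz]
    exact absurd (hy.trans hz.symm) hyz
  rwa [← hN, Subgraph.mem_neighborSet, Walk.adj_toSubgraph_iff_mem_edges] at hfwd

lemma exists_ringEdge_of_mem_edges_of_start (hc : c.IsCycle) {k : Branch} {d₀ : Fin ℓ}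
    (hu : u = (ringV k d₀, none)) {e : Sym2 (GV ℓ p)} (he : e ∈ c.edges) :
    ∃ d, e = ringEdge k d := by
  have hsupp : ∀ z ∈ c.support, ∃ d, z = (ringV k d, none) :=
    c.mem_of_mem_support_of_closed (S := {z | ∃ d, z = (ringV k d, none)}) ⟨d₀, hu⟩
      fun a b hab ⟨d, ha⟩ => by
        obtain ⟨k', d', hk'⟩ := exists_ringEdge_of_mem_edges hc hab
        subst ha
        obtain ⟨-, hb | hb⟩ := eq_ringV_of_ringEdge_eq hk'
        exacts [⟨_, hb⟩, ⟨_, hb⟩]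
  obtain ⟨k', d', rfl⟩ := exists_ringEdge_of_mem_edges hc he
  obtain ⟨d'', h⟩ := hsupp _ (c.fst_mem_support_of_mem_edges he)
  obtain ⟨rfl, -⟩ := ringV_inj.mp (Prod.mk.inj h).1
  exact ⟨d', rfl⟩

open Fin.NatCast in
theorem exists_ring_of_isCycle (hc : c.IsCycle) :
    ∃ k d, u = (ringV k d, none) ∧ ∀ e, e ∈ c.edges ↔ ∃ d, e = ringEdge k d := by
  obtain ⟨e, he, hue⟩ := (Walk.mem_support_iff_exists_mem_edges_of_not_nil hc.not_nil).mp
    c.start_mem_support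
  obtain ⟨k, d, rfl⟩ := exists_ringEdge_of_mem_edges hc he
  obtain ⟨d₀, hu⟩ : ∃ d₀, u = (ringV k d₀, none) := by
    rcases Sym2.mem_iff.mp hue with h | h
    exacts [⟨_, h⟩, ⟨_, h⟩]
  have hE e (he : e ∈ c.edges) := exists_ringEdge_of_mem_edges_of_start hc hu he
  have hall : ∀ n : ℕ, (ringV k (d₀ + (n : Fin ℓ)), none) ∈ c.support := by
    intro n
    induction n with
    | zero => simp [← hu]
    | succ n ih =>
      rw [Nat.cast_succ, ← add_assoc]
      exact c.snd_mem_support_of_mem_edges (ringEdge_mem_edges_of_mem_support hc hE ih)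
  refine ⟨k, d₀, hu, fun e => ⟨hE e, ?_⟩⟩
  rintro ⟨d, rfl⟩
  have hd := hall (d - d₀).val
  rw [Fin.cast_val_eq_self, add_sub_cancel] at hd
  exact ringEdge_mem_edges_of_mem_support hc hE hd

theorem mem_edges_iff_of_isCycle (hc : c.IsCycle) {k : Branch} {d : Fin ℓ}
    (hu : u = (ringV k d, none)) {e : Sym2 (GV ℓ p)} :
    e ∈ c.edges ↔ ∃ d, e = ringEdge k d := by
  obtain ⟨k', d', hu', h⟩ := exists_ring_of_isCycle hc
  obtain ⟨rfl, -⟩ := ringV_inj.mp (Prod.mk.inj (hu'.symm.trans hu)).1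
  exact h e

theorem length_eq_of_isCycle (hℓ : 3 ≤ ℓ) (hc : c.IsCycle) : c.length = ℓ := by
  obtain ⟨k, -, -, h⟩ := exists_ring_of_isCycle hc
  have hfin : c.edges.toFinset = Finset.univ.image (ringEdge k) := by
    ext e
    simp [h, eq_comm]
  rw [← c.length_edges, ← List.toFinset_card_of_nodup hc.edges_nodup, hfin,
    Finset.card_image_of_injective _ fun d d' h => ((ringEdge_inj hℓ).mp h).2, Finset.card_univ,
    Fintype.card_fin]

theorem exists_isCycle_ringV (hℓ : 3 ≤ ℓ) (k : Branch) :
    ∃ c : (GraphLP ℓ p).Walk (ringV k 0, none) (ringV k 0, none), c.IsCycle := by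
  obtain ⟨n, rfl⟩ : ∃ n, ℓ = n + 3 := ⟨ℓ - 3, by omega⟩
  let f : cycleGraph (n + 3) →g GraphLP (n + 3) p :=
    { toFun := fun d => (ringV k d, none)
      map_rel' := fun {a b} h => by
        rcases cycleGraph_adj.mp h with h | h
        · rw [sub_eq_iff_eq_add'] at h
          exact h ▸ (adj_ringV (by omega) k b).symm
        · rw [sub_eq_iff_eq_add'] at h
          exact h ▸ adj_ringV (by omega) k a }
  have hf : Function.Injective f := fun a b h => (ringV_inj.mp (Prod.mk.inj h).1).2
  exact ⟨(cycleGraph.cycle n).map f, cycleGraph.isCycle_cycle.map hf⟩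

theorem exists_walk_spine_ringV (hp : 1 ≤ p) (k : Branch) :
    ∃ w : (GraphLP ℓ p).Walk ((k.1, .inl k.2.1), none) (ringV k 0, none), w.length = p := by
  have h : ∀ m ≤ p, ∃ w : (GraphLP ℓ p).Walk (armV k 0, none) (armV k m, none), w.length = m := by
    intro m hm
    induction m with
    | zero => exact ⟨.nil, rfl⟩
    | succ m ih =>
      obtain ⟨w, hw⟩ := ih (by omega)
      exact ⟨w.concat (adj_armV k hm), by simp [hw]⟩
  obtain ⟨w, hw⟩ := h p le_rfl
  obtain ⟨p, rfl⟩ := Nat.exists_eq_add_of_le' hp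
  exact ⟨w.copy (by rw [armV_zero]) (by rw [armV_of_le k le_rfl]), by rw [Walk.length_copy, hw]⟩

theorem two_mul_le_length_of_branch_ne {k k' : Branch} (hk : k ≠ k') {d d' : Fin ℓ}
    (w : (GraphLP ℓ p).Walk (ringV k d, none) (ringV k' d', none)) : 2 * p ≤ w.length := by
  -- the depth, counted negatively outside branch `k`, changes by at most one along an edge
  let f : GV ℓ p → ℤ := fun z => if branch z.1 = some k then depth z.1 else -depth z.1
  have hlink : ∀ a b, Link a b → f a ≤ f b + 1 ∧ f b ≤ f a + 1 := by
    rintro a b (_ | _ | ⟨k', m, h⟩ | _)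
    · simp [f]
    · simp [f, branch, depth]
    · have h₀ : f (armV k' m, none) = if k' = k then (m : ℤ) else -m := by
        rcases m with _ | m
        · simp [f, armV_zero, branch, depth]
        · simp [f, branch_armV k' (Nat.succ_ne_zero m), depth_armV k' h.le]
      have h₁ : f (armV k' (m + 1), none) = if k' = k then (m + 1 : ℤ) else -(m + 1) := by
        simp [f, branch_armV k' (Nat.succ_ne_zero m), depth_armV k' h]
      rw [h₀, h₁]
      split_ifs <;> omega
    · simp [f, ringV, branch, depth]
  have hf : ∀ a b, (GraphLP ℓ p).Adj a b → f a ≤ f b + 1 := fun a b h =>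
    (link_of_adj h).elim (fun h => (hlink a b h).1) fun h => (hlink b a h).2
  have hu : f (ringV k d, none) = p := by simp [f, ringV, branch, depth]
  have hv : f (ringV k' d', none) = -p := by simp [f, ringV, branch, depth, Ne.symm hk]
  have := w.le_add_length hf
  rw [hu, hv] at this
  omega

theorem cycleDistance_graphLP (hℓ : 3 ≤ ℓ) (hp : 1 ≤ p) :
    cycleDistance (GraphLP ℓ p) = ((2 * p : ℕ) : ℕ∞) := by
  refine le_antisymm ?_ (le_cycleDistance fun u v c₁ c₂ hc₁ hc₂ hne P _ => ?_)
  · obtain ⟨c₁, hc₁⟩ := exists_isCycle_ringV (p := p) hℓ (false, 0, 0)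
    obtain ⟨c₂, hc₂⟩ := exists_isCycle_ringV (p := p) hℓ (false, 0, 1)
    have hne : ¬ ∀ e, e ∈ c₁.edges ↔ e ∈ c₂.edges := fun h => by
      obtain ⟨d, hd⟩ := (mem_edges_iff_of_isCycle hc₂ rfl).mp
        ((h _).mp ((mem_edges_iff_of_isCycle hc₁ rfl).mpr ⟨0, rfl⟩))
      exact absurd ((ringEdge_inj hℓ).mp hd).1 (by decide)
    obtain ⟨w₁, hw₁⟩ := exists_walk_spine_ringV (ℓ := ℓ) hp (false, 0, 0)
    obtain ⟨w₂, hw₂⟩ := exists_walk_spine_ringV (ℓ := ℓ) hp (false, 0, 1)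
    let w := w₁.reverse.append w₂
    calc cycleDistance (GraphLP ℓ p) ≤ w.bypass.length :=
          cycleDistance_le hc₁ hc₂ hne _ w.bypass_isPath
      _ ≤ w.length := by exact_mod_cast w.length_bypass_le_length
      _ = ((2 * p : ℕ) : ℕ∞) := by simp [w, hw₁, hw₂, two_mul]
  · obtain ⟨k₁, d₁, rfl, h₁⟩ := exists_ring_of_isCycle hc₁
    obtain ⟨k₂, d₂, rfl, h₂⟩ := exists_ring_of_isCycle hc₂
    have hk : k₁ ≠ k₂ := by
      rintro rfl
      exact hne fun e => (h₁ e).trans (h₂ e).symm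
    exact_mod_cast two_mul_le_length_of_branch_ne hk P

theorem egirth_graphLP (hℓ : 3 ≤ ℓ) : (GraphLP ℓ p).egirth = ℓ := by
  obtain ⟨c, hc⟩ := exists_isCycle_ringV (p := p) hℓ (false, 0, 0)
  refine le_antisymm ?_ (le_egirth.mpr fun a w hw => by rw [length_eq_of_isCycle hℓ hw])
  exact (egirth_le_length hc).trans (by rw [length_eq_of_isCycle hℓ hc])

theorem isCactus_graphLP (hℓ : 3 ≤ ℓ) : IsCactus (GraphLP ℓ p) := by
  intro u v c₁ c₂ hc₁ hc₂ e he₁ he₂ e'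
  obtain ⟨k₁, -, -, h₁⟩ := exists_ring_of_isCycle hc₁
  obtain ⟨k₂, -, -, h₂⟩ := exists_ring_of_isCycle hc₂
  obtain ⟨d₁, rfl⟩ := (h₁ e).mp he₁
  obtain ⟨d₂, hd⟩ := (h₂ _).mp he₂
  obtain ⟨rfl, -⟩ := (ringEdge_inj hℓ).mp hd
  rw [h₁, h₂]

lemma adj_leaf_iff {x : CoreV ℓ p} {i : Fin 8} {z : GV ℓ p} :
    (GraphLP ℓ p).Adj (x, some i) z ↔ z = (x, none) := by
  refine ⟨fun h => ?_, fun h => h ▸ (adj_leaf x i).symm⟩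
  rcases link_of_adj h with h | h <;> cases h
  rfl

lemma degree_leaf (x : CoreV ℓ p) (i : Fin 8) : (GraphLP ℓ p).degree (x, some i) = 1 := by
  rw [← card_neighborFinset_eq_degree, Finset.card_eq_one]
  exact ⟨(x, none), by ext z; simp [adj_leaf_iff]⟩

theorem eight_le_ncard_pendant (v : GV ℓ p) (hv : (GraphLP ℓ p).degree v ≠ 1) :
    8 ≤ {u : GV ℓ p | (GraphLP ℓ p).Adj v u ∧ (GraphLP ℓ p).degree u = 1}.ncard := by
  obtain ⟨x, _ | i⟩ := v
  · have hinj : Function.Injective fun i : Fin 8 => ((x, some i) : GV ℓ p) :=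
      fun i j h => Option.some_injective _ (Prod.mk.inj h).2
    calc 8 = (Set.range fun i : Fin 8 => ((x, some i) : GV ℓ p)).ncard := by
          rw [Set.ncard_range_of_injective hinj, Nat.card_eq_fintype_card, Fintype.card_fin]
      _ ≤ _ := Set.ncard_le_ncard (by rintro _ ⟨i, rfl⟩; exact ⟨adj_leaf x i, degree_leaf x i⟩)
  · exact absurd (degree_leaf x i) hv

end GCN

open GCN in
/-- For every odd `ℓ ≥ 3` and every `p ≥ 1`, the graph `G(ℓ, p)` is a cactus, its girth equals
`ℓ`, its cycle-distance equals `2p`, every cycle of `G(ℓ, p)` is odd, and every vertex of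
`G(ℓ, p)` that is not a leaf has at least 8 pendant neighbors. -/
theorem statement9 (ℓ p : ℕ) (hodd : Odd ℓ) (hl : 3 ≤ ℓ) (hp : 1 ≤ p) :
    IsCactus (GraphLP ℓ p) ∧
    (GraphLP ℓ p).egirth = (ℓ : ℕ∞) ∧
    cycleDistance (GraphLP ℓ p) = ((2 * p : ℕ) : ℕ∞) ∧
    (∀ (u : GV ℓ p) (w : (GraphLP ℓ p).Walk u u), w.IsCycle → Odd w.length) ∧
    (∀ v : GV ℓ p, (GraphLP ℓ p).degree v ≠ 1 →
      8 ≤ {u : GV ℓ p | (GraphLP ℓ p).Adj v u ∧ (GraphLP ℓ p).degree u = 1}.ncard) := by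
  have : NeZero ℓ := ⟨by omega⟩
  refine ⟨isCactus_graphLP hl, egirth_graphLP hl, cycleDistance_graphLP hl hp,
    fun u w hw => ?_, eight_le_ncard_pendant⟩
  rw [length_eq_of_isCycle hl hw]
  exact hodd
end
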